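/- arXiv:2006.08351 — 8 statements merged into one kernel-verified Lean document; each statement's English description precedes it below -/
import Mathlib

section
/- Let P be a polynomial of degree n ≥ 2 with real coefficients. Then all zeros of P are real and distinct if and only if for every j ∈ {1, ..., n-1} and every real x, (P^{(n-j-1)})'(x)^2 - P^{(n-j-1)}(x) · (P^{(n-j-1)})''(x) > 0. -/
/-!
Write `L(p) = p'² - p p''`. From `L((X - a) p) = p² + (X - a)² L(p)`, induction over the
factorisation gives `L(p) > 0` on `ℝ` whenever `p` has positive degree and only simple real roots;
by Rolle, every derivative of such a `P` is again of this kind.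

Conversely, go down from the linear derivative `P^{(n-1)}`. Suppose `p'` has simple real roots
`r₁ < ⋯ < r_d` only, say `p' = c ∏ (X - rᵢ)`, and `L(p) > 0`. At `r_k` this reads
`p(r_k) p''(r_k) < 0`, and `p''(r_k) = c ∏_{i ≠ k} (r_k - rᵢ)` has the sign of `c (-1)^(d-k)`.
So `p` alternates in sign along the `r_k`, and continues to alternate at points far out on both
sides, where the sign is read off from `c · lc(p) > 0`. The intermediate value theorem then
yields `d + 1` distinct roots of `p`.
-/

open Polynomial Finset Filter

namespace Polynomial

noncomputable def laguerre {R : Type*} [CommRing R] (p : R[X]) : R[X] :=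
  derivative p ^ 2 - p * derivative (derivative p)

section CommRing

variable {R : Type*} [CommRing R]

lemma laguerre_C_mul (c : R) (p : R[X]) : laguerre (C c * p) = C c ^ 2 * laguerre p := by
  simp only [laguerre, derivative_C_mul]
  ring

lemma laguerre_X_sub_C_mul (a : R) (p : R[X]) :
    laguerre ((X - C a) * p) = p ^ 2 + (X - C a) ^ 2 * laguerre p := by
  simp only [laguerre, derivative_mul, derivative_add, derivative_sub, derivative_X,
    derivative_C, sub_zero, one_mul]
  ring

lemma eval_derivative_prod_X_sub_C [DecidableEq R] {s : Finset R} {r : R} (hr : r ∈ s) :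
    (derivative (∏ a ∈ s, (X - C a))).eval r = ∏ a ∈ s.erase r, (r - a) := by
  rw [Finset.prod_eq_multiset_prod, Finset.prod_eq_multiset_prod, Finset.erase_val]
  exact eval_multiset_prod_X_sub_C_derivative hr

end CommRing

lemma natDegree_iterate_derivative_eq {R : Type*} [CommRing R] [IsDomain R] [CharZero R]
    (p : R[X]) (k : ℕ) : (derivative^[k] p).natDegree = p.natDegree - k := by
  induction k with
  | zero => rfl
  | succ k ih => rw [Function.iterate_succ_apply', natDegree_derivative, ih, Nat.sub_sub]

lemma card_roots_eq_natDegree_and_nodup_iff {K : Type*} [Field K] [DecidableEq K] (p : K[X]) :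
    (Multiset.card p.roots = p.natDegree ∧ p.roots.Nodup) ↔ p.natDegree ≤ #p.roots.toFinset := by
  refine ⟨fun ⟨hcard, hnodup⟩ => (Multiset.toFinset_card_of_nodup hnodup ▸ hcard).ge, fun h => ?_⟩
  have hle := p.roots.toFinset_card_le
  have hcard : Multiset.card p.roots = p.natDegree := le_antisymm p.card_roots' (h.trans hle)
  exact ⟨hcard, Multiset.toFinset_card_eq_card_iff_nodup.1 (by omega)⟩

lemma eq_C_leadingCoeff_mul_prod_of_natDegree_le {K : Type*} [Field K] [DecidableEq K]
    {p : K[X]} (h : p.natDegree ≤ #p.roots.toFinset) :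
    p = C p.leadingCoeff * ∏ a ∈ p.roots.toFinset, (X - C a) := by
  obtain ⟨hcard, hnodup⟩ := (card_roots_eq_natDegree_and_nodup_iff p).2 h
  conv_lhs => rw [← C_leadingCoeff_mul_prod_multiset_X_sub_C hcard]
  rw [Finset.prod_eq_multiset_prod, Multiset.toFinset_val, Multiset.dedup_eq_self.2 hnodup]

lemma natDegree_iterate_derivative_le_card_roots_toFinset {p : ℝ[X]}
    (h : p.natDegree ≤ #p.roots.toFinset) (k : ℕ) :
    (derivative^[k] p).natDegree ≤ #(derivative^[k] p).roots.toFinset := by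
  induction k with
  | zero => exact h
  | succ k ih =>
    have := card_roots_toFinset_le_derivative (derivative^[k] p)
    rw [Function.iterate_succ_apply', natDegree_derivative]
    omega

lemma natDegree_le_card_roots_toFinset_of_natDegree_le_one {K : Type*} [Field K] [DecidableEq K]
    {p : K[X]} (h : p.natDegree ≤ 1) : p.natDegree ≤ #p.roots.toFinset := by
  rcases Nat.le_one_iff_eq_zero_or_eq_one.1 h with h0 | h1
  · simp [h0]
  · have hp : p ≠ 0 := by rintro rfl; simp at h1
    obtain ⟨x, hx⟩ := exists_root_of_degree_eq_one (degree_eq_iff_natDegree_eq hp |>.2 h1)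
    rw [h1]
    exact card_pos.2 ⟨x, Multiset.mem_toFinset.2 ((mem_roots hp).2 hx)⟩

section LinearOrderedField

variable {K : Type*} [Field K] [LinearOrder K] [IsStrictOrderedRing K]

lemma laguerre_prod_X_sub_C_eval_pos {t : Finset K} (ht : t.Nonempty) (x : K) :
    0 < (laguerre (∏ a ∈ t, (X - C a))).eval x := by
  induction ht using Finset.Nonempty.cons_induction with
  | singleton a => simp [laguerre]
  | cons a t ha ht ih =>
    rw [prod_cons, laguerre_X_sub_C_mul]
    simp only [eval_add, eval_mul, eval_pow, eval_sub, eval_X, eval_C]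
    rcases eq_or_ne x a with rfl | hxa
    · have : (∏ b ∈ t, (X - C b)).eval x ≠ 0 := by
        simp only [eval_prod, eval_sub, eval_X, eval_C]
        exact prod_ne_zero_iff.2 fun b hb => sub_ne_zero.2 fun h => ha (h ▸ hb)
      simp only [sub_self]
      positivity
    · have := sub_ne_zero.2 hxa
      exact add_pos_of_nonneg_of_pos (sq_nonneg _) (mul_pos (by positivity) ih)

lemma laguerre_eval_pos [DecidableEq K] {p : K[X]} (hdeg : 0 < p.natDegree)
    (h : p.natDegree ≤ #p.roots.toFinset) (x : K) : 0 < (laguerre p).eval x := by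
  have hp : p ≠ 0 := by rintro rfl; simp at hdeg
  rw [eq_C_leadingCoeff_mul_prod_of_natDegree_le h, laguerre_C_mul, eval_mul, eval_pow, eval_C]
  have := leadingCoeff_ne_zero.2 hp
  exact mul_pos (by positivity) (laguerre_prod_X_sub_C_eval_pos (card_pos.1 (hdeg.trans_le h)) x)

lemma neg_one_pow_mul_prod_erase_sub_pos [DecidableEq K] (s : Finset K) (r : K) :
    0 < (-1) ^ #{a ∈ s | r < a} * ∏ a ∈ s.erase r, (r - a) := by
  rw [← prod_filter_mul_prod_filter_not (s.erase r) (r < ·), filter_erase,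
    erase_eq_of_notMem (by simp), ← mul_assoc, ← prod_neg]
  refine mul_pos (prod_pos fun a ha => ?_) (prod_pos fun a ha => ?_)
  · simp only [mem_filter] at ha
    linarith
  · simp only [mem_filter, mem_erase, not_lt] at ha
    exact sub_pos.2 (lt_of_le_of_ne ha.2 ha.1.1)

lemma leadingCoeff_derivative_mul_leadingCoeff_pos {p : K[X]} (hp : 0 < p.natDegree) :
    0 < (derivative p).leadingCoeff * p.leadingCoeff := by
  have := leadingCoeff_ne_zero.2 (ne_zero_of_natDegree_gt hp)
  have : (0 : K) < p.natDegree := by exact_mod_cast hp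
  rw [leadingCoeff_derivative, mul_right_comm, ← sq]
  positivity

end LinearOrderedField

lemma eventually_atTop_eval_pos {p : ℝ[X]} (h : 0 < p.leadingCoeff) :
    ∀ᶠ x in atTop, 0 < p.eval x :=
  p.isEquivalent_atTop_lead.eventually_pos
    ((eventually_gt_atTop 0).mono fun _ hx => mul_pos h (pow_pos hx _))

lemma eventually_atBot_neg_one_pow_mul_eval_pos {p : ℝ[X]} (h : 0 < p.leadingCoeff) :
    ∀ᶠ x in atBot, 0 < (-1) ^ p.natDegree * p.eval x :=
  ((Asymptotics.IsEquivalent.refl).mul p.isEquivalent_atBot_lead).eventually_pos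
    ((eventually_lt_atBot 0).mono fun x hx => by
      rw [Pi.mul_apply, mul_left_comm, ← mul_pow]
      exact mul_pos h (pow_pos (by linarith) _))

lemma exists_outside_finset_eval_signs {p : ℝ[X]} {σ : ℝ} (h : 0 < σ * p.leadingCoeff)
    (S : Finset ℝ) : ∃ a b, a < b ∧ (∀ s ∈ S, a < s ∧ s < b) ∧
      0 < (-1) ^ p.natDegree * σ * p.eval a ∧ 0 < σ * p.eval b := by
  have hlc : 0 < (C σ * p).leadingCoeff := by rwa [leadingCoeff_mul, leadingCoeff_C]
  have hdeg : (C σ * p).natDegree = p.natDegree := natDegree_C_mul (left_ne_zero_of_mul h.ne')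
  obtain ⟨b, hb, hSb⟩ : ∃ b, 0 < (C σ * p).eval b ∧ ∀ s ∈ S, s < b :=
    ((eventually_atTop_eval_pos hlc).and
      ((eventually_all_finset S).2 fun s _ => eventually_gt_atTop s)).exists
  obtain ⟨a, ha, hab, hSa⟩ :
      ∃ a, 0 < (-1) ^ (C σ * p).natDegree * (C σ * p).eval a ∧ a < b ∧ ∀ s ∈ S, a < s :=
    ((eventually_atBot_neg_one_pow_mul_eval_pos hlc).and ((eventually_lt_atBot b).and
      ((eventually_all_finset S).2 fun s _ => eventually_lt_atBot s))).exists
  rw [hdeg, eval_mul, eval_C, ← mul_assoc] at ha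
  rw [eval_mul, eval_C] at hb
  exact ⟨a, b, hab, fun s hs => ⟨hSa s hs, hSb s hs⟩, ha, hb⟩

lemma card_le_card_roots_toFinset_add_one_of_alternating {p : ℝ[X]} {s : Finset ℝ} {σ : ℝ}
    (h : ∀ x ∈ s, 0 < (-1) ^ #{y ∈ s | x < y} * σ * p.eval x) :
    #s ≤ #p.roots.toFinset + 1 := by
  refine card_le_of_interleaved fun x hx y hy hxy hgap => ?_
  have hcount : #{z ∈ s | x < z} = #{z ∈ s | y < z} + 1 := by
    have : {z ∈ s | x < z} = insert y {z ∈ s | y < z} := by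
      ext z
      simp only [mem_filter, mem_insert]
      constructor
      · rintro ⟨hz, hxz⟩
        rcases (not_lt.1 fun hzy => hgap z hz ⟨hxz, hzy⟩).eq_or_lt with rfl | hyz
        exacts [Or.inl rfl, Or.inr ⟨hz, hyz⟩]
      · rintro (rfl | ⟨hz, hyz⟩)
        exacts [⟨hy, hxy⟩, ⟨hz, hxy.trans hyz⟩]
    rw [this, card_insert_of_notMem (by simp)]
  have hx' : 0 < -((-1) ^ #{z ∈ s | y < z} * σ * p.eval x) := by
    have := h x hx
    rw [hcount, pow_succ] at this
    linarith
  have hy' := h y hy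
  have hp : p ≠ 0 := by rintro rfl; simp at hy'
  have hsign : p.eval x * p.eval y < 0 := by
    generalize (-1 : ℝ) ^ #{z ∈ s | y < z} * σ = a at hx' hy'
    by_contra! hnonneg
    nlinarith [mul_pos hx' hy', mul_nonneg (sq_nonneg a) hnonneg]
  obtain ⟨z, hz, hz0⟩ : ∃ z ∈ Set.Ioo x y, p.eval z = 0 := by
    rcases mul_neg_iff.1 hsign with ⟨h1, h2⟩ | ⟨h1, h2⟩
    · exact intermediate_value_Ioo' hxy.le p.continuousOn ⟨h2, h1⟩
    · exact intermediate_value_Ioo hxy.le p.continuousOn ⟨h1, h2⟩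
  exact ⟨z, Multiset.mem_toFinset.2 ((mem_roots hp).2 hz0), hz⟩

lemma neg_one_pow_mul_eval_pos_of_mem_roots_derivative {p : ℝ[X]}
    (hd : (derivative p).natDegree ≤ #(derivative p).roots.toFinset)
    (hL : ∀ x, 0 < (laguerre p).eval x) {r : ℝ} (hr : r ∈ (derivative p).roots.toFinset) :
    0 < (-1) ^ (#{s ∈ (derivative p).roots.toFinset | r < s} + 1) *
      (derivative p).leadingCoeff * p.eval r := by
  set S := (derivative p).roots.toFinset
  set c := (derivative p).leadingCoeff
  have hfac : derivative p = C c * ∏ a ∈ S, (X - C a) :=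
    eq_C_leadingCoeff_mul_prod_of_natDegree_le hd
  have h1 : (derivative p).eval r = 0 := ((mem_roots'.1 (Multiset.mem_toFinset.1 hr)).2)
  have h2 : (derivative (derivative p)).eval r = c * ∏ a ∈ S.erase r, (r - a) := by
    rw [hfac, derivative_C_mul, eval_mul, eval_C, eval_derivative_prod_X_sub_C hr]
  have hsign := neg_one_pow_mul_prod_erase_sub_pos S r
  have hLr := hL r
  simp only [laguerre, eval_sub, eval_pow, eval_mul, h1, h2] at hLr
  set ε : ℝ := (-1) ^ #{s ∈ S | r < s}
  set π := ∏ a ∈ S.erase r, (r - a)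
  have hε : ε * ε = 1 := by rw [← mul_pow]; simp
  have key : (ε * π) * (ε * (-1) * c * p.eval r) = 0 ^ 2 - p.eval r * (c * π) := by
    linear_combination (-(c * π * p.eval r)) * hε
  rw [pow_succ]
  exact pos_of_mul_pos_right (key ▸ hLr) hsign.le

lemma natDegree_le_card_roots_toFinset_of_laguerre_pos {p : ℝ[X]}
    (hd : (derivative p).natDegree ≤ #(derivative p).roots.toFinset)
    (hL : ∀ x, 0 < (laguerre p).eval x) : p.natDegree ≤ #p.roots.toFinset := by
  set S := (derivative p).roots.toFinset
  set c := (derivative p).leadingCoeff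
  rcases Nat.eq_zero_or_pos p.natDegree with h0 | hpos
  · simp [h0]
  have hS : #S + 1 = p.natDegree := by
    have h1 : #S ≤ Multiset.card (derivative p).roots := Multiset.toFinset_card_le _
    have h2 := (derivative p).card_roots'
    rw [natDegree_derivative] at hd h2
    omega
  obtain ⟨xlo, xhi, hxlo_lt, hS_between, hxlo, hxhi⟩ :=
    exists_outside_finset_eval_signs (leadingCoeff_derivative_mul_leadingCoeff_pos hpos) S
  have hxhi_notMem : xhi ∉ S := fun h => (hS_between xhi h).2.false
  have hxlo_notMem : xlo ∉ insert xhi S := by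
    simpa [hxlo_lt.ne] using fun h => (hS_between xlo h).1.false
  have halt := card_le_card_roots_toFinset_add_one_of_alternating (p := p)
    (s := insert xlo (insert xhi S)) (σ := c) ?_
  · rw [card_insert_of_notMem hxlo_notMem, card_insert_of_notMem hxhi_notMem] at halt
    omega
  intro x hx
  rcases mem_insert.1 hx with rfl | hx
  · have : {y ∈ insert x (insert xhi S) | x < y} = insert xhi S := by
      ext y
      simp only [mem_filter, mem_insert]
      grind
    rw [this, card_insert_of_notMem hxhi_notMem, hS]
    linarith
  rcases mem_insert.1 hx with rfl | hr
  · have : {y ∈ insert xlo (insert x S) | x < y} = ∅ := by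
      ext y
      simp only [mem_filter, mem_insert, notMem_empty, iff_false]
      grind
    rw [this, card_empty, pow_zero, one_mul]
    exact hxhi
  · have : {y ∈ insert xlo (insert xhi S) | x < y} = insert xhi {s ∈ S | x < s} := by
      ext y
      simp only [mem_filter, mem_insert]
      grind
    rw [this, card_insert_of_notMem (by simp [hxhi_notMem])]
    exact neg_one_pow_mul_eval_pos_of_mem_roots_derivative hd hL hr

lemma natDegree_le_card_roots_toFinset_of_laguerre_iterate_derivative_pos {p : ℝ[X]}
    (hL : ∀ k < p.natDegree - 1, ∀ x, 0 < (laguerre (derivative^[k] p)).eval x) :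
    p.natDegree ≤ #p.roots.toFinset := by
  suffices ∀ k ≤ p.natDegree - 1,
      (derivative^[k] p).natDegree ≤ #(derivative^[k] p).roots.toFinset from this 0 (Nat.zero_le _)
  intro k hk
  induction hk using Nat.decreasingInduction with
  | self =>
    refine natDegree_le_card_roots_toFinset_of_natDegree_le_one ?_
    rw [natDegree_iterate_derivative_eq]
    omega
  | of_succ k hk ih =>
    rw [Function.iterate_succ_apply'] at ih
    exact natDegree_le_card_roots_toFinset_of_laguerre_pos ih (hL k hk)

end Polynomial

theorem chamberland_general (n : ℕ) (P : ℝ[X]) (hdeg : P.natDegree = n) :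
    (P.roots.card = n ∧ P.roots.Nodup) ↔
      ∀ j ∈ Finset.Icc 1 (n - 1), ∀ x : ℝ,
        ((derivative (derivative^[n - j - 1] P)).eval x) ^ 2 -
          (derivative^[n - j - 1] P).eval x *
            ((derivative (derivative (derivative^[n - j - 1] P))).eval x) > 0 := by
  subst hdeg
  have hlaguerre (k : ℕ) (x : ℝ) :
      (derivative (derivative^[k] P)).eval x ^ 2 - (derivative^[k] P).eval x *
        (derivative (derivative (derivative^[k] P))).eval x =
        (laguerre (derivative^[k] P)).eval x := by
    simp [laguerre]
  simp only [hlaguerre, gt_iff_lt, mem_Icc, card_roots_eq_natDegree_and_nodup_iff]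
  constructor
  · intro hP j hj x
    refine laguerre_eval_pos ?_ (natDegree_iterate_derivative_le_card_roots_toFinset hP _) x
    rw [natDegree_iterate_derivative_eq]
    omega
  · intro hL
    refine natDegree_le_card_roots_toFinset_of_laguerre_iterate_derivative_pos fun k hk x => ?_
    have := hL (P.natDegree - 1 - k) (by omega) x
    rwa [show P.natDegree - (P.natDegree - 1 - k) - 1 = k by omega] at this

theorem chamberland (n : ℕ) (hn : 2 ≤ n) (P : ℝ[X]) (hdeg : P.natDegree = n) :
    (P.roots.card = n ∧ P.roots.Nodup) ↔
      ∀ j ∈ Finset.Icc 1 (n - 1), ∀ x : ℝ,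
        ((derivative (derivative^[n - j - 1] P)).eval x) ^ 2 -
          (derivative^[n - j - 1] P).eval x *
            ((derivative (derivative (derivative^[n - j - 1] P))).eval x) > 0 :=
  chamberland_general n P hdeg
end

section
/- Let Q be a real polynomial of degree m ≥ 1 with all zeros real and distinct. Then for all real x, Q'(x)^2 - Q(x)·Q''(x) > 0. -/
/-!
Write `W p = p' ^ 2 - p * p''`, the Wronskian of `p'` and `p`. For a product one has
`W ((X - r) * p) = p ^ 2 + (X - r) ^ 2 * W p`, so `W` of a product of linear factors is a sum of
squares, hence nonnegative. At a point `x`, split off the factor `X - r` with `r = x` if `x` is a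
root (any root otherwise); since the roots are simple, the cofactor `p` does not vanish at `x`,
so `W` is positive there. A constant factor `c` only multiplies `W` by `c ^ 2`.
-/

open Polynomial

namespace Polynomial

section CommRing

variable {R : Type*} [CommRing R]

theorem wronskian_derivative_self (p : R[X]) :
    wronskian (derivative p) p = derivative p ^ 2 - p * derivative (derivative p) := by
  rw [wronskian]
  ring

theorem wronskian_derivative_C_mul (c : R) (p : R[X]) :
    wronskian (derivative (C c * p)) (C c * p) = C c ^ 2 * wronskian (derivative p) p := by
  rw [wronskian_derivative_self, wronskian_derivative_self, derivative_C_mul, derivative_C_mul]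
  ring

theorem wronskian_derivative_X_sub_C_mul (r : R) (p : R[X]) :
    wronskian (derivative ((X - C r) * p)) ((X - C r) * p) =
      p ^ 2 + (X - C r) ^ 2 * wronskian (derivative p) p := by
  rw [wronskian_derivative_self, wronskian_derivative_self]
  simp only [derivative_mul, derivative_add, derivative_sub, derivative_X, derivative_C,
    derivative_one, derivative_zero]
  ring

end CommRing

section OrderedRing

variable {R : Type*} [CommRing R] [LinearOrder R] [IsStrictOrderedRing R]

theorem eval_wronskian_derivative_prod_X_sub_C_nonneg (s : Multiset R) (x : R) :
    0 ≤ (wronskian (derivative (s.map (X - C ·)).prod) (s.map (X - C ·)).prod).eval x := by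
  induction s using Multiset.induction_on with
  | empty => simp
  | cons r t ih =>
    rw [Multiset.map_cons, Multiset.prod_cons, wronskian_derivative_X_sub_C_mul]
    simp only [eval_add, eval_mul, eval_pow]
    positivity

theorem eval_wronskian_derivative_prod_X_sub_C_pos {s : Multiset R} (hs : s.Nodup)
    (hne : s ≠ 0) (x : R) :
    0 < (wronskian (derivative (s.map (X - C ·)).prod) (s.map (X - C ·)).prod).eval x := by
  obtain ⟨r, hr, hx⟩ : ∃ r ∈ s, x ∉ s.erase r := by
    by_cases hxs : x ∈ s
    · exact ⟨x, hxs, hs.notMem_erase⟩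
    · obtain ⟨r, hr⟩ := Multiset.exists_mem_of_ne_zero hne
      exact ⟨r, hr, fun h => hxs (Multiset.mem_of_mem_erase h)⟩
  set P := ((s.erase r).map (X - C ·)).prod
  have hP : P.eval x ≠ 0 := by
    simpa [P, eval_multiset_prod, sub_eq_zero, eq_comm] using hx
  rw [← Multiset.cons_erase hr, Multiset.map_cons, Multiset.prod_cons,
    wronskian_derivative_X_sub_C_mul]
  simp only [eval_add, eval_mul, eval_pow]
  have hW := eval_wronskian_derivative_prod_X_sub_C_nonneg (s.erase r) x
  positivity

end OrderedRing

end Polynomial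

theorem discriminant_pos (m : ℕ) (hm : 1 ≤ m) (Q : ℝ[X]) (hdeg : Q.natDegree = m)
    (hroots : Q.roots.card = m ∧ Q.roots.Nodup) :
    ∀ x : ℝ, ((derivative Q).eval x) ^ 2 - Q.eval x * ((derivative (derivative Q)).eval x) > 0 := by
  intro x
  obtain ⟨hcard, hnodup⟩ := hroots
  have hQ : Q ≠ 0 := by
    rintro rfl
    simp at hdeg
    omega
  have hne : Q.roots ≠ 0 := by
    rintro h
    simp [h] at hcard
    omega
  set P := (Q.roots.map (X - C ·)).prod
  have hfactor : C Q.leadingCoeff * P = Q :=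
    C_leadingCoeff_mul_prod_multiset_X_sub_C (hcard.trans hdeg.symm)
  have hW := wronskian_derivative_C_mul Q.leadingCoeff P
  rw [hfactor, wronskian_derivative_self] at hW
  have hWx := congrArg (eval x) hW
  simp only [eval_sub, eval_mul, eval_pow, eval_C] at hWx
  rw [gt_iff_lt, hWx]
  have hP := eval_wronskian_derivative_prod_X_sub_C_pos hnodup hne x
  have hc : Q.leadingCoeff ≠ 0 := leadingCoeff_ne_zero.mpr hQ
  positivity
end

section
/- Let Q be a real polynomial of degree m ≥ 2 with positive leading coefficient, and suppose Q'(x)^2 - Q(x)·Q''(x) > 0 for all real x. If Q' has m-1 distinct real roots, then Q has m distinct real roots, and moreover the roots of Q' strictly interlace those of Q. -/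
/-!
Let t₀ < ⋯ < t_{m-2} be the roots of Q'. Since they are simple,
Q''(tᵢ) = c ∏_{j ≠ i} (tᵢ - tⱼ) has the sign (-1)^(m-2-i), and at a critical point the
hypothesis reads Q(tᵢ)·Q''(tᵢ) < 0, so Q(tᵢ) has the sign (-1)^(m-1-i). Thus Q alternates in
sign along the tᵢ, is negative at the last one and has the sign of (-1)^(m-1) at the first; as
Q behaves like its leading term at ±∞, the intermediate value theorem gives a root in each
of the m gaps (-∞, t₀), (t₀, t₁), …, (t_{m-2}, ∞). Degree m leaves no room for further roots.
-/

open Polynomial Filter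

theorem Multiset.pairwise_sort_lt_of_nodup {α : Type*} [LinearOrder α] {s : Multiset α}
    (hs : s.Nodup) : (s.sort (· ≤ ·)).Pairwise (· < ·) :=
  ((Multiset.pairwise_sort _ _).sortedLE.sortedLT_of_nodup
    (by rw [← Multiset.coe_nodup, Multiset.sort_eq]; exact hs)).pairwise

theorem List.Pairwise.neg_one_pow_mul_prod_eraseIdx_sub_pos {R : Type*} [CommRing R]
    [LinearOrder R] [IsStrictOrderedRing R] {l : List R} (hl : l.Pairwise (· < ·)) {i : ℕ}
    (hi : i < l.length) :
    0 < (-1) ^ (l.length - 1 - i) * ((l.eraseIdx i).map (l[i] - ·)).prod := by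
  rw [← List.take_append_drop i l, ← List.getElem_cons_drop hi, List.pairwise_append,
    List.pairwise_cons] at hl
  obtain ⟨-, ⟨hafter, -⟩, hbefore⟩ := hl
  have hbelow : 0 < ((l.take i).map (l[i] - ·)).prod :=
    List.prod_pos fun x hx => by
      obtain ⟨a, ha, rfl⟩ := List.mem_map.1 hx
      exact sub_pos.2 (hbefore a ha _ List.mem_cons_self)
  have habove : 0 < ((l.drop (i + 1)).map (· - l[i])).prod :=
    List.prod_pos fun x hx => by
      obtain ⟨a, ha, rfl⟩ := List.mem_map.1 hx
      exact sub_pos.2 (hafter a ha)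
  set k := l.length - 1 - i
  have hflip : ((l.drop (i + 1)).map (l[i] - ·)).prod
      = (-1) ^ k * ((l.drop (i + 1)).map (· - l[i])).prod := by
    have hlen : (l.drop (i + 1)).length = k := by simp only [List.length_drop]; omega
    rw [← hlen, ← List.length_map (· - l[i]), ← List.prod_map_neg, List.map_map]
    congr 2; ext; simp
  have hsign (A B : R) : (-1) ^ k * (A * ((-1) ^ k * B)) = A * B := by
    linear_combination A * B * (by rw [← mul_pow]; norm_num : ((-1 : R) ^ k) * (-1) ^ k = 1)
  rw [List.eraseIdx_eq_take_drop_succ, List.map_append, List.prod_append, hflip, hsign]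
  exact mul_pos hbelow habove

namespace Polynomial

theorem sort_roots_eq_of_pairwise {R : Type*} [CommRing R] [IsDomain R] [LinearOrder R]
    {p : R[X]} (hp : p ≠ 0) {l : List R} (hl : l.Pairwise (· < ·))
    (hlen : l.length = p.natDegree) (hroots : ∀ x ∈ l, p.IsRoot x) :
    p.roots.sort (· ≤ ·) = l := by
  have hle : (l : Multiset R) ≤ p.roots :=
    (Multiset.le_iff_subset (Multiset.coe_nodup.2 (hl.imp ne_of_lt))).2
      fun x hx => (mem_roots hp).2 (hroots x hx)
  have heq : p.roots = l :=
    (Multiset.eq_of_le_of_card_le hle (by simpa [hlen] using p.card_roots')).symm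
  rw [heq, Multiset.coe_sort]
  exact List.mergeSort_eq_self _ (hl.imp le_of_lt)

theorem exists_isRoot_Ioo_of_eval_mul_neg (p : ℝ[X]) {a b : ℝ} (hab : a < b)
    (h : p.eval a * p.eval b < 0) : ∃ c ∈ Set.Ioo a b, p.IsRoot c := by
  have hp : ContinuousOn (p.eval ·) (Set.Icc a b) := p.continuous.continuousOn
  rcases mul_neg_iff.1 h with ⟨ha, hb⟩ | ⟨ha, hb⟩
  · exact intermediate_value_Ioo' hab.le hp ⟨hb, ha⟩
  · exact intermediate_value_Ioo hab.le hp ⟨ha, hb⟩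

theorem exists_isRoot_gt_of_eval_neg {p : ℝ[X]} (hp : 0 < p.leadingCoeff) {a : ℝ}
    (ha : p.eval a < 0) : ∃ c, a < c ∧ p.IsRoot c := by
  have hdeg : 0 < p.degree := by
    by_contra! h
    rw [eq_C_of_degree_le_zero h, leadingCoeff_C] at hp
    rw [eq_C_of_degree_le_zero h, eval_C] at ha
    exact ha.not_gt hp
  obtain ⟨b, hb, hab⟩ :=
    ((tendsto_atTop_of_leadingCoeff_nonneg p hdeg hp.le).eventually_gt_atTop 0
      |>.and (eventually_gt_atTop a)).exists
  obtain ⟨c, hc, hroot⟩ := p.exists_isRoot_Ioo_of_eval_mul_neg hab (mul_neg_of_neg_of_pos ha hb)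
  exact ⟨c, hc.1, hroot⟩

theorem exists_isRoot_lt_of_neg_one_pow_mul_eval_neg {p : ℝ[X]} (hp : 0 < p.leadingCoeff)
    {a : ℝ} (ha : (-1) ^ p.natDegree * p.eval a < 0) : ∃ c, c < a ∧ p.IsRoot c := by
  set q : ℝ[X] := (-1) ^ p.natDegree * p.comp (-X)
  have hq : q.leadingCoeff = p.leadingCoeff := by
    simp only [q, leadingCoeff_mul, leadingCoeff_pow, leadingCoeff_neg, leadingCoeff_one,
      leadingCoeff_comp (by simp : (-X : ℝ[X]).natDegree ≠ 0), leadingCoeff_X]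
    rw [mul_left_comm, ← mul_pow]
    norm_num
  obtain ⟨c, hc, hroot⟩ :=
    exists_isRoot_gt_of_eval_neg (hq ▸ hp) (a := -a) (by simpa [q] using ha)
  exact ⟨-c, by linarith, by simpa [q] using hroot⟩

theorem neg_one_pow_mul_eval_derivative_sort_roots_pos {P : ℝ[X]} (hP : 0 < P.leadingCoeff)
    (hsplit : P.roots.card = P.natDegree) (hnodup : P.roots.Nodup) {i : ℕ}
    (hi : i < (P.roots.sort (· ≤ ·)).length) :
    0 < (-1) ^ (P.natDegree - 1 - i) * (derivative P).eval ((P.roots.sort (· ≤ ·))[i]) := by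
  set l := P.roots.sort (· ≤ ·)
  have hroots : (l : Multiset ℝ) = P.roots := Multiset.sort_eq _ _
  have hlen : l.length = P.natDegree := by rw [← hsplit, ← hroots, Multiset.coe_card]
  have hderiv :
      (derivative P).eval l[i] = P.leadingCoeff * ((l.eraseIdx i).map (l[i] - ·)).prod := by
    conv_lhs => rw [← C_leadingCoeff_mul_prod_multiset_X_sub_C hsplit, ← hroots]
    rw [derivative_C_mul, eval_mul, eval_C,
      eval_multiset_prod_X_sub_C_derivative (Multiset.mem_coe.2 (List.getElem_mem hi)),
      Multiset.coe_erase, Multiset.coe_eq_coe.2 (List.erase_getElem hi)]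
    rfl
  rw [hderiv, mul_left_comm, ← hlen]
  exact mul_pos hP
    ((Multiset.pairwise_sort_lt_of_nodup hnodup).neg_one_pow_mul_prod_eraseIdx_sub_pos hi)

theorem neg_one_pow_mul_eval_sort_roots_derivative_neg {Q : ℝ[X]}
    (hlead : 0 < (derivative Q).leadingCoeff)
    (hsplit : (derivative Q).roots.card = (derivative Q).natDegree)
    (hnodup : (derivative Q).roots.Nodup)
    (hcrit : ∀ x, (derivative Q).IsRoot x → Q.eval x * (derivative (derivative Q)).eval x < 0)
    {i : ℕ} (hi : i < ((derivative Q).roots.sort (· ≤ ·)).length) :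
    (-1) ^ ((derivative Q).natDegree - 1 - i) * Q.eval ((derivative Q).roots.sort (· ≤ ·))[i]
      < 0 := by
  set t := ((derivative Q).roots.sort (· ≤ ·))[i]
  set s : ℝ := (-1) ^ ((derivative Q).natDegree - 1 - i)
  have hQ'' : 0 < s * (derivative (derivative Q)).eval t :=
    neg_one_pow_mul_eval_derivative_sort_roots_pos hlead hsplit hnodup hi
  have hopp := hcrit t (isRoot_of_mem_roots ((Multiset.mem_sort _).1 (List.getElem_mem hi)))
  have hsq : s * s = 1 := by rw [← mul_pow]; norm_num
  refine neg_of_mul_neg_left ?_ hQ''.le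
  linear_combination hopp + Q.eval t * (derivative (derivative Q)).eval t * hsq

theorem exists_isRoot_in_gap_of_alternating {p : ℝ[X]} (hp : 0 < p.leadingCoeff) {l : List ℝ}
    (hl : l.Pairwise (· < ·)) (hdeg : p.natDegree = l.length + 1)
    (hsign : ∀ i (hi : i < l.length), (-1) ^ (l.length - 1 - i) * p.eval l[i] < 0)
    {j : ℕ} (hj : j ≤ l.length) :
    ∃ c, p.IsRoot c ∧ (∀ h : j < l.length, c < l[j]) ∧ (∀ h : 0 < j, l[j - 1] < c) := by
  rcases Nat.eq_zero_or_pos j with rfl | hj₀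
  · rcases Nat.eq_zero_or_pos l.length with hn | hn
    · have hdeg₁ : p.natDegree = 1 := by omega
      obtain ⟨c, hc⟩ :=
        exists_root_of_degree_eq_one ((degree_eq_iff_natDegree_eq_of_pos one_pos).2 hdeg₁)
      exact ⟨c, hc, fun h => absurd h (by omega), fun h => absurd h (by omega)⟩
    · have h₀ := hsign 0 hn
      obtain ⟨c, hc, hroot⟩ := exists_isRoot_lt_of_neg_one_pow_mul_eval_neg hp (a := l[0]) (by
        rwa [hdeg, show l.length + 1 = l.length - 1 - 0 + 2 by omega, pow_add, neg_one_sq,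
          mul_one])
      exact ⟨c, hroot, fun _ => hc, fun h => absurd h (by omega)⟩
  rcases Nat.lt_or_ge j l.length with hjn | hjn
  · have hlt : l[j - 1] < l[j] := List.pairwise_iff_getElem.1 hl _ _ _ _ (by omega)
    have hprev := hsign (j - 1) (by omega)
    have hcur := hsign j hjn
    rw [show l.length - 1 - (j - 1) = l.length - 1 - j + 1 by omega, pow_succ] at hprev
    have hmul : p.eval l[j - 1] * p.eval l[j] < 0 := by
      rcases neg_one_pow_eq_or ℝ (l.length - 1 - j) with h | h <;>
        rw [h] at hprev hcur <;> nlinarith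
    obtain ⟨c, hc, hroot⟩ := p.exists_isRoot_Ioo_of_eval_mul_neg hlt hmul
    exact ⟨c, hroot, fun _ => hc.2, fun _ => hc.1⟩
  · have hlast := hsign (j - 1) (by omega)
    rw [show l.length - 1 - (j - 1) = 0 by omega, pow_zero, one_mul] at hlast
    obtain ⟨c, hc, hroot⟩ := exists_isRoot_gt_of_eval_neg hp hlast
    exact ⟨c, hroot, fun h => absurd h (by omega), fun _ => hc⟩

theorem roots_interlace_of_alternating {p : ℝ[X]} (hp : 0 < p.leadingCoeff) {l : List ℝ}
    (hl : l.Pairwise (· < ·)) (hdeg : p.natDegree = l.length + 1)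
    (hsign : ∀ i (hi : i < l.length), (-1) ^ (l.length - 1 - i) * p.eval l[i] < 0) :
    (p.roots.card = l.length + 1 ∧ p.roots.Nodup) ∧
      ∀ i (hi : i < l.length),
        (p.roots.sort (· ≤ ·))[i]! < l[i] ∧ l[i] < (p.roots.sort (· ≤ ·))[i + 1]! := by
  choose u hroot hbelow habove using fun j : Fin (l.length + 1) =>
    exists_isRoot_in_gap_of_alternating hp hl hdeg hsign j.is_le
  have hu : StrictMono u := Fin.strictMono_iff_lt_succ.2 fun i =>
    (hbelow i.castSucc i.2).trans (habove i.succ i.succ_pos)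
  have hsort : p.roots.sort (· ≤ ·) = List.ofFn u :=
    sort_roots_eq_of_pairwise (leadingCoeff_ne_zero.1 hp.ne') hu.sortedLT_ofFn.pairwise
      (by rw [List.length_ofFn, hdeg]) fun x hx => by
        obtain ⟨j, rfl⟩ := List.mem_ofFn.1 hx
        exact hroot j
  have hroots : p.roots = List.ofFn u := by rw [← hsort, Multiset.sort_eq]
  refine ⟨⟨by simp [hroots], by simpa [hroots] using List.nodup_ofFn.2 hu.injective⟩,
    fun i hi => ?_⟩
  rw [hsort, getElem!_pos (List.ofFn u) i (by rw [List.length_ofFn]; omega),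
    getElem!_pos (List.ofFn u) (i + 1) (by rw [List.length_ofFn]; omega), List.getElem_ofFn,
    List.getElem_ofFn]
  exact ⟨hbelow ⟨i, by omega⟩ hi, habove ⟨i + 1, by omega⟩ (by simp)⟩

end Polynomial

theorem backward_step (m : ℕ) (hm : 2 ≤ m) (Q : ℝ[X]) (hdeg : Q.natDegree = m)
    (hlead : 0 < Q.leadingCoeff)
    (hineq : ∀ x : ℝ,
      ((derivative Q).eval x) ^ 2 - Q.eval x * ((derivative (derivative Q)).eval x) > 0)
    (hQ' : (derivative Q).roots.card = m - 1 ∧ (derivative Q).roots.Nodup) :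
    (Q.roots.card = m ∧ Q.roots.Nodup) ∧
      ∀ i, i + 1 < m →
        (Q.roots.sort (· ≤ ·))[i]! < ((derivative Q).roots.sort (· ≤ ·))[i]! ∧
          ((derivative Q).roots.sort (· ≤ ·))[i]! < (Q.roots.sort (· ≤ ·))[i + 1]! := by
  obtain ⟨hcard', hnodup'⟩ := hQ'
  have hdeg' : (derivative Q).natDegree = m - 1 := by rw [natDegree_derivative, hdeg]
  have hlead' : 0 < (derivative Q).leadingCoeff := by
    rw [leadingCoeff_derivative, hdeg]
    exact mul_pos hlead (by exact_mod_cast (by omega : 0 < m))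
  have hcrit : ∀ x, (derivative Q).IsRoot x →
      Q.eval x * (derivative (derivative Q)).eval x < 0 := fun x hx => by
    simpa [hx.eq_zero] using hineq x
  set T := (derivative Q).roots.sort (· ≤ ·)
  have hlen : T.length = m - 1 := by rw [Multiset.length_sort, hcard']
  have hsign : ∀ i (hi : i < T.length), (-1) ^ (T.length - 1 - i) * Q.eval T[i] < 0 :=
    fun i hi => by
      simpa only [hlen, hdeg'] using neg_one_pow_mul_eval_sort_roots_derivative_neg hlead'
        (hcard'.trans hdeg'.symm) hnodup' hcrit hi
  obtain ⟨hroots, hinter⟩ := Polynomial.roots_interlace_of_alternating (l := T) hlead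
    (Multiset.pairwise_sort_lt_of_nodup hnodup') (by rw [hdeg, hlen]; omega) hsign
  refine ⟨by rwa [hlen, show m - 1 + 1 = m by omega] at hroots, fun i hi => ?_⟩
  rw [getElem!_pos T i (by rw [hlen]; omega)]
  exact hinter i (by rw [hlen]; omega)
end

section
/- Let Q be a real polynomial of degree m ≥ 2 with positive leading coefficient such that Q''(x)Q(x) - Q'(x)^2 < 0 for all x, and assume Q' has all real distinct roots. If a is the largest root of Q', then Q(a) < 0, and in particular Q has at least one real root greater than a. -/
open Polynomial Filter Set Topology

theorem largest_crit_neg (m : ℕ) (hm : 2 ≤ m) (Q : ℝ[X]) (hdeg : Q.natDegree = m)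
    (hlead : 0 < Q.leadingCoeff)
    (hineq : ∀ x : ℝ,
      ((derivative Q).eval x) ^ 2 - Q.eval x * ((derivative (derivative Q)).eval x) > 0)
    (hQ' : (derivative Q).roots.card = m - 1 ∧ (derivative Q).roots.Nodup)
    (a : ℝ) (ha : a ∈ (derivative Q).roots) (hmax : ∀ b ∈ (derivative Q).roots, b ≤ a) :
    Q.eval a < 0 ∧ ∃ x : ℝ, a < x ∧ Q.eval x = 0 := by
  obtain ⟨hcard, hnodup⟩ := hQ'
  have hdpos : 0 < Q.natDegree := by omega
  have hQne : Q ≠ 0 := by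
    intro h; rw [h, natDegree_zero] at hdeg; omega
  have hdegP : (derivative Q).degree = ((m - 1 : ℕ) : WithBot ℕ) := by
    rw [degree_derivative_eq Q hdpos, hdeg]
  have hndP : (derivative Q).natDegree = m - 1 := natDegree_eq_of_degree_eq_some hdegP
  have hPne : derivative Q ≠ 0 := by
    intro h; rw [h, degree_zero] at hdegP; exact (by simp : (⊥ : WithBot ℕ) ≠ _) hdegP
  have hleadP : 0 < (derivative Q).leadingCoeff := by
    have h1 : (derivative Q).leadingCoeff = (derivative Q).coeff (m - 1) := by
      rw [Polynomial.leadingCoeff, hndP]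
    rw [h1, coeff_derivative]
    have h2 : Q.coeff (m - 1 + 1) = Q.leadingCoeff := by
      rw [Polynomial.leadingCoeff, hdeg]; congr 1; omega
    rw [h2]
    have : (0 : ℝ) < (m - 1 : ℕ) + 1 := by positivity
    exact mul_pos hlead this
  have hfac := C_leadingCoeff_mul_prod_multiset_X_sub_C
    (p := derivative Q) (by rw [hcard, hndP])
  -- (A) : derivative Q is positive to the right of a
  have hApos : ∀ x : ℝ, a < x → 0 < (derivative Q).eval x := by
    intro x hx
    rw [← hfac, eval_mul, eval_C, eval_multiset_prod]
    refine mul_pos hleadP (Multiset.prod_pos ?_)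
    intro y hy
    rw [Multiset.map_map, Multiset.mem_map] at hy
    obtain ⟨r, hr, rfl⟩ := hy
    simp only [Function.comp_apply, eval_sub, eval_X, eval_C]
    have := hmax r hr
    linarith
  have haroot : (derivative Q).eval a = 0 := by
    exact (mem_roots hPne).1 ha
  -- from the inequality at a
  have h1 : Q.eval a * (derivative (derivative Q)).eval a < 0 := by
    have h := hineq a
    rw [haroot] at h
    nlinarith
  -- (B) : second derivative at a is nonnegative
  have hB : 0 ≤ (derivative (derivative Q)).eval a := by
    have hd : HasDerivAt (fun x => (derivative Q).eval x)
        ((derivative (derivative Q)).eval a) a := (derivative Q).hasDerivAt a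
    have hslope := hasDerivAt_iff_tendsto_slope.mp hd
    have hmono : 𝓝[>] a ≤ 𝓝[≠] a :=
      nhdsWithin_mono _ fun x hx => ne_of_gt hx
    refine ge_of_tendsto (hslope.mono_left hmono) ?_
    filter_upwards [self_mem_nhdsWithin] with x hx
    have hx' : a < x := hx
    rw [slope_def_field, haroot, sub_zero]
    exact div_nonneg (hApos x hx').le (by linarith)
  have hQa : Q.eval a < 0 := by nlinarith
  refine ⟨hQa, ?_⟩
  -- Q tends to +∞
  have htop : Tendsto (fun x => Q.eval x) atTop atTop := by
    refine Q.tendsto_atTop_of_leadingCoeff_nonneg ?_ hlead.le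
    rw [degree_eq_natDegree hQne, hdeg]
    exact_mod_cast (by omega : 0 < m)
  obtain ⟨x0, h1x, hax⟩ :=
    ((htop.eventually_ge_atTop 1).and (eventually_gt_atTop a)).exists
  have hmem : (0 : ℝ) ∈ Icc (Q.eval a) (Q.eval x0) := ⟨hQa.le, by linarith⟩
  obtain ⟨x, hxmem, hxval0⟩ :=
    intermediate_value_Icc hax.le (Q.continuousOn (s := Icc a x0)) hmem
  have hxval : Q.eval x = 0 := hxval0
  refine ⟨x, lt_of_le_of_ne hxmem.1 ?_, hxval⟩
  intro h
  rw [← h] at hxval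
  linarith
end

section
/- Let P and Q be real polynomials with deg P = deg Q + 1, both with positive leading coefficients, such that P'(x)Q(x) - Q'(x)P(x) > 0 for all real x. If Q has all real and distinct roots, then between any two consecutive roots of Q there lies at least one root of P. -/
/-!
At a root `c` of `Q` the Wronskian reduces to `-Q'(c) P(c) > 0`, so `P(c)` has the sign opposite
to `Q'(c)`. Between consecutive roots `a < b` the polynomial `Q` keeps one sign, so `Q'(a)` and
`Q'(b)` have (weakly) opposite signs; hence `P(a)` and `P(b)` have strictly opposite signs and the
intermediate value theorem yields a root of `P` in `(a, b)`.
-/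

open Polynomial Set

theorem IsPreconnected.pos_or_neg_of_ne_zero {α : Type*} [TopologicalSpace α] {s : Set α}
    {f : α → ℝ} (hs : IsPreconnected s) (hf : ContinuousOn f s) (hne : ∀ x ∈ s, f x ≠ 0) :
    (∀ x ∈ s, 0 < f x) ∨ (∀ x ∈ s, f x < 0) := by
  by_contra! h
  obtain ⟨⟨x, hx, hfx⟩, y, hy, hfy⟩ := h
  obtain ⟨z, hz, hfz⟩ := hs.intermediate_value hx hy hf ⟨hfx, hfy⟩
  exact hne z hz hfz

theorem exists_mem_Ioo_eq_zero_of_mul_neg {f : ℝ → ℝ} {a b : ℝ} (hab : a ≤ b)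
    (hf : ContinuousOn f (Icc a b)) (h : f a * f b < 0) : ∃ x ∈ Ioo a b, f x = 0 := by
  rcases mul_neg_iff.mp h with ⟨ha, hb⟩ | ⟨ha, hb⟩
  · exact intermediate_value_Ioo' hab hf ⟨hb, ha⟩
  · exact intermediate_value_Ioo hab hf ⟨ha, hb⟩

theorem IsMinOn.sub_mul_nonneg_of_hasDerivAt {f : ℝ → ℝ} {s : Set ℝ} {a b f' : ℝ}
    (hmin : IsMinOn f s a) (hs : segment ℝ a b ⊆ s) (hf : HasDerivAt f f' a) :
    0 ≤ (b - a) * f' := by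
  simpa using hmin.localize.hasFDerivWithinAt_nonneg hf.hasFDerivAt.hasFDerivWithinAt
    (sub_mem_posTangentConeAt_of_segment_subset hs)

theorem mul_nonpos_of_hasDerivAt_of_ne_zero_on_Ioo {f : ℝ → ℝ} {a b fa fb : ℝ} (hab : a < b)
    (ha : f a = 0) (hb : f b = 0) (hf : ContinuousOn f (Ioo a b))
    (hne : ∀ x ∈ Ioo a b, f x ≠ 0) (hfa : HasDerivAt f fa a) (hfb : HasDerivAt f fb b) :
    fa * fb ≤ 0 := by
  wlog hpos : ∀ x ∈ Ioo a b, 0 < f x generalizing f fa fb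
  · have hneg := (isPreconnected_Ioo.pos_or_neg_of_ne_zero hf hne).resolve_left hpos
    simpa using this (f := -f) (by simp [ha]) (by simp [hb]) hf.neg (by simpa using hne)
      hfa.neg hfb.neg (by simpa using hneg)
  have hmin : ∀ c, f c = 0 → IsMinOn f (Icc a b) c := by
    intro c hc x hx
    rcases eq_endpoints_or_mem_Ioo_of_mem_Icc hx with rfl | rfl | hx
    · simp [ha, hc]
    · simp [hb, hc]
    · simpa [hc] using (hpos x hx).le
  have haI : a ∈ Icc a b := left_mem_Icc.mpr hab.le
  have hbI : b ∈ Icc a b := right_mem_Icc.mpr hab.le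
  have hsa := (hmin a ha).sub_mul_nonneg_of_hasDerivAt
    ((convex_Icc a b).segment_subset haI hbI) hfa
  have hsb := (hmin b hb).sub_mul_nonneg_of_hasDerivAt
    ((convex_Icc a b).segment_subset hbI haI) hfb
  nlinarith [mul_nonneg hsa hsb, mul_pos (sub_pos.mpr hab) (sub_pos.mpr hab)]

theorem root_between_general (P Q : ℝ[X])
    (hW : ∀ x : ℝ, (derivative P).eval x * Q.eval x - (derivative Q).eval x * P.eval x > 0) :
    ∀ a b : ℝ, a ∈ Q.roots → b ∈ Q.roots → a < b →
      (∀ c ∈ Q.roots, c ≤ a ∨ b ≤ c) →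
      ∃ x : ℝ, a < x ∧ x < b ∧ P.eval x = 0 := by
  intro a b ha hb hab hcons
  have hQ : Q ≠ 0 := ne_zero_of_mem_roots ha
  have hQa : Q.eval a = 0 := (mem_roots hQ).mp ha
  have hQb : Q.eval b = 0 := (mem_roots hQ).mp hb
  have hQ_ne : ∀ x ∈ Ioo a b, Q.eval x ≠ 0 := fun x hx hx0 => by
    rcases hcons x ((mem_roots hQ).mpr hx0) with h | h <;> linarith [hx.1, hx.2]
  have hQ' : (derivative Q).eval a * (derivative Q).eval b ≤ 0 :=
    mul_nonpos_of_hasDerivAt_of_ne_zero_on_Ioo hab hQa hQb Q.continuousOn hQ_ne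
      (Q.hasDerivAt a) (Q.hasDerivAt b)
  have hP : P.eval a * P.eval b < 0 := by
    have hWab := mul_pos (hW a) (hW b)
    rw [hQa, hQb] at hWab
    nlinarith
  obtain ⟨x, hx, hPx⟩ := exists_mem_Ioo_eq_zero_of_mul_neg hab.le P.continuousOn hP
  exact ⟨x, hx.1, hx.2, hPx⟩

theorem root_between (m : ℕ) (hm : 2 ≤ m) (P Q : ℝ[X])
    (hdegP : P.natDegree = m) (hdegQ : Q.natDegree = m - 1)
    (hPlead : 0 < P.leadingCoeff) (hQlead : 0 < Q.leadingCoeff)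
    (hW : ∀ x : ℝ, (derivative P).eval x * Q.eval x - (derivative Q).eval x * P.eval x > 0)
    (hQroots : Q.roots.card = m - 1 ∧ Q.roots.Nodup) :
    ∀ a b : ℝ, a ∈ Q.roots → b ∈ Q.roots → a < b →
      (∀ c ∈ Q.roots, c ≤ a ∨ b ≤ c) →
      ∃ x : ℝ, a < x ∧ x < b ∧ P.eval x = 0 :=
  root_between_general P Q hW
end

section
/- Let P and Q be real polynomials with positive leading coefficients and deg P = deg Q + 1 ≥ 2, such that P'(x)Q(x) - Q'(x)P(x) > 0 for all real x. If Q has all real and distinct roots, then P has all real and distinct roots, and the roots of Q strictly interlace those of P. -/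
/-!
At a root `r` of `Q` the Wronskian condition reads `Q'(r) P(r) < 0`. As `Q` has positive leading
coefficient and simple roots `r₀ < ⋯ < r₍ₙ₋₁₎`, `Q'(rᵢ)` has the sign `(-1)^(n-1-i)` of
`∏_{j ≠ i} (rᵢ - rⱼ)`, so `P(rᵢ)` has sign `(-1)^(n-i)`. Since `P` has sign `(-1)^(n+1)` near `-∞`
and `+1` near `+∞`, the intermediate value theorem yields a root of `P` in each of the `n + 1` gaps
`(-∞, r₀), (r₀, r₁), …, (r₍ₙ₋₁₎, ∞)`; as `deg P = n + 1`, these are all the roots of `P`.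
-/

open Polynomial Filter

theorem neg_one_pow_succ_mul_pos_of_mul_neg {R : Type*} [CommRing R] [LinearOrder R]
    [IsStrictOrderedRing R] {k : ℕ} {a b : R} (ha : 0 < (-1) ^ k * a) (hab : a * b < 0) :
    0 < (-1) ^ (k + 1) * b := by
  rw [pow_succ]
  rcases neg_one_pow_eq_or R k with h | h <;> rw [h] at ha ⊢ <;> nlinarith

theorem mul_neg_of_neg_one_pow_succ_mul_pos {R : Type*} [CommRing R] [LinearOrder R]
    [IsStrictOrderedRing R] {k : ℕ} {a b : R} (ha : 0 < (-1) ^ (k + 1) * a)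
    (hb : 0 < (-1) ^ k * b) : a * b < 0 := by
  rw [pow_succ] at ha
  rcases neg_one_pow_eq_or R k with h | h <;> rw [h] at ha hb <;> nlinarith

theorem Multiset.neg_one_pow_card_filter_lt_mul_prod_sub_pos {R : Type*} [CommRing R]
    [LinearOrder R] [IsStrictOrderedRing R] {s : Multiset R} {x : R} (hx : x ∉ s) :
    0 < (-1) ^ (s.filter (x < ·)).card * (s.map (x - ·)).prod := by
  induction s using Multiset.induction_on with
  | empty => simp
  | cons a s ih =>
    rw [Multiset.mem_cons, not_or] at hx
    have hs := ih hx.2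
    rw [Multiset.map_cons, Multiset.prod_cons]
    rcases lt_or_gt_of_ne hx.1 with hxa | hax
    · rw [Multiset.filter_cons_of_pos _ hxa, Multiset.card_cons, pow_succ]
      nlinarith [sub_neg.2 hxa]
    · rw [Multiset.filter_cons_of_neg _ (not_lt.2 hax.le)]
      nlinarith [sub_pos.2 hax]

theorem List.SortedLT.length_filter_getElem_lt {α : Type*} [Preorder α] [DecidableLT α] :
    ∀ {L : List α}, L.SortedLT → ∀ i (hi : i < L.length),
      (L.filter (L[i] < ·)).length = L.length - 1 - i
  | [], _, i, hi => by simp at hi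
  | a :: t, hL, i, hi => by
    rw [List.sortedLT_iff_pairwise, List.pairwise_cons] at hL
    cases i with
    | zero =>
      simp [List.filter_eq_self.2 fun b hb => decide_eq_true (hL.1 b hb)]
    | succ i =>
      have hi' : i < t.length := by simpa using hi
      have hat : a < t[i] := hL.1 _ (List.getElem_mem hi')
      simp only [List.getElem_cons_succ, List.filter_cons, List.length_cons]
      rw [if_neg (by simpa using hat.not_gt),
        (List.Pairwise.sortedLT hL.2).length_filter_getElem_lt i hi']
      omega

/-- For a sorted list this is `[L[j-1], L[j]]`, unbounded on the side where the index is out of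
range. -/
def List.closedGap {α : Type*} [Preorder α] (L : List α) (j : ℕ) : Set α :=
  {y | ∀ i (hi : i < L.length), (i < j → L[i] ≤ y) ∧ (j ≤ i → y ≤ L[i])}

theorem Multiset.sortedLT_sort_of_nodup {α : Type*} [LinearOrder α] {s : Multiset α}
    (hs : s.Nodup) : (s.sort (· ≤ ·)).SortedLT :=
  (Multiset.pairwise_sort _ _).sortedLE.sortedLT_of_nodup
    (by rw [← Multiset.coe_nodup, Multiset.sort_eq]; exact hs)

namespace Polynomial

theorem exists_isRoot_of_eval_mul_neg (P : ℝ[X]) {a b : ℝ} (h : P.eval a * P.eval b < 0) :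
    ∃ x ∈ Set.uIoo a b, P.IsRoot x := by
  have h0 : (0 : ℝ) ∈ Set.uIcc (P.eval a) (P.eval b) := by
    rw [Set.mem_uIcc]
    rcases mul_neg_iff.1 h with h | h
    exacts [Or.inr ⟨h.2.le, h.1.le⟩, Or.inl ⟨h.1.le, h.2.le⟩]
  obtain ⟨x, hx, hPx⟩ := intermediate_value_uIcc P.continuous.continuousOn h0
  have hxa : x ≠ a := by rintro rfl; simp [hPx] at h
  have hxb : x ≠ b := by rintro rfl; simp [hPx] at h
  exact ⟨x, ⟨lt_of_le_of_ne hx.1 (inf_ind (p := (· ≠ x)) a b hxa.symm hxb.symm),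
    lt_of_le_of_ne hx.2 (sup_ind (p := (x ≠ ·)) a b hxa hxb)⟩, hPx⟩

theorem eventually_atBot_neg_one_pow_mul_eval_pos_s7 {P : ℝ[X]} (hdeg : 0 < P.natDegree)
    (hlead : 0 < P.leadingCoeff) : ∀ᶠ x in atBot, 0 < (-1) ^ P.natDegree * P.eval x := by
  have hlim : Tendsto (fun x : ℝ => P.leadingCoeff * (-x) ^ P.natDegree) atBot atTop :=
    ((tendsto_pow_atTop hdeg.ne').comp tendsto_neg_atBot_atTop).const_mul_atTop hlead
  have hequiv := (Asymptotics.IsEquivalent.refl (u := fun _ : ℝ => (-1 : ℝ) ^ P.natDegree)).mul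
    P.isEquivalent_atBot_lead
  refine (hequiv.symm.tendsto_atTop (hlim.congr fun x => ?_)).eventually_gt_atTop 0
  simp only [Pi.mul_apply, neg_pow x]
  ring

theorem roots_eq_ofFn_of_injective {R : Type*} [CommRing R] [IsDomain R] {P : R[X]} {n : ℕ}
    (hdeg : P.natDegree = n) {g : Fin n → R} (hg : Function.Injective g)
    (hroot : ∀ j, P.IsRoot (g j)) : P.roots = List.ofFn g := by
  rcases eq_or_ne P 0 with rfl | hP
  · rw [natDegree_zero] at hdeg
    subst hdeg
    simp
  have hnodup : (List.ofFn g : Multiset R).Nodup := Multiset.coe_nodup.2 (List.nodup_ofFn.2 hg)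
  refine (Multiset.eq_of_le_of_card_le ((Multiset.le_iff_subset hnodup).2 fun x hx => ?_) ?_).symm
  · obtain ⟨j, rfl⟩ := List.mem_ofFn.1 (Multiset.mem_coe.1 hx)
    exact (mem_roots hP).2 (hroot j)
  · simpa [hdeg] using P.card_roots'

theorem neg_one_pow_card_filter_lt_mul_eval_derivative_pos {Q : ℝ[X]}
    (hsplit : Q.roots.card = Q.natDegree) (hlead : 0 < Q.leadingCoeff) (hnodup : Q.roots.Nodup)
    {r : ℝ} (hr : r ∈ Q.roots) :
    0 < (-1) ^ (Q.roots.filter (r < ·)).card * (derivative Q).eval r := by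
  have hQ' : (derivative Q).eval r = Q.leadingCoeff * ((Q.roots.erase r).map (r - ·)).prod := by
    conv_lhs => rw [← C_leadingCoeff_mul_prod_multiset_X_sub_C hsplit]
    rw [derivative_C_mul, eval_C_mul, eval_multiset_prod_X_sub_C_derivative hr]
  have hfilter : Q.roots.filter (r < ·) = (Q.roots.erase r).filter (r < ·) := by
    conv_lhs => rw [← Multiset.cons_erase hr]
    exact Multiset.filter_cons_of_neg _ (lt_irrefl r)
  rw [hQ', hfilter, mul_left_comm]
  exact mul_pos hlead (Multiset.neg_one_pow_card_filter_lt_mul_prod_sub_pos hnodup.notMem_erase)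

section Interlacing

variable {P : ℝ[X]} {L : List ℝ}

theorem exists_mem_closedGap_neg_one_pow_succ_mul_eval_pos (hL : L.SortedLT)
    (hdeg : P.natDegree = L.length + 1) (hlead : 0 < P.leadingCoeff)
    (hsign : ∀ i (hi : i < L.length), 0 < (-1) ^ (L.length - i) * P.eval L[i])
    {j : ℕ} (hj : j ≤ L.length) :
    ∃ a ∈ L.closedGap j, 0 < (-1) ^ (L.length - j + 1) * P.eval a := by
  cases j with
  | zero =>
    have hbelow : ∀ᶠ a in atBot, ∀ y ∈ L, a ≤ y :=
      L.finite_toSet.eventually_all.2 fun y _ => eventually_le_atBot y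
    have hpos := eventually_atBot_neg_one_pow_mul_eval_pos_s7 (by omega) hlead
    obtain ⟨a, ha, hbelow⟩ := (hpos.and hbelow).exists
    refine ⟨a, fun i hi => ⟨fun h => absurd h (Nat.not_lt_zero i),
      fun _ => hbelow _ (List.getElem_mem hi)⟩, by rwa [hdeg] at ha⟩
  | succ j =>
    refine ⟨L[j], fun i hi => ⟨fun h => ?_, fun h => ?_⟩, ?_⟩
    · exact hL.sortedLE.getElem_le_getElem_of_le (by omega)
    · exact hL.sortedLE.getElem_le_getElem_of_le (by omega)
    · rw [show L.length - (j + 1) + 1 = L.length - j by omega]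
      exact hsign j (by omega)

theorem exists_mem_closedGap_neg_one_pow_mul_eval_pos (hL : L.SortedLT)
    (hdeg : 0 < P.natDegree) (hlead : 0 < P.leadingCoeff)
    (hsign : ∀ i (hi : i < L.length), 0 < (-1) ^ (L.length - i) * P.eval L[i])
    {j : ℕ} (hj : j ≤ L.length) :
    ∃ b ∈ L.closedGap j, 0 < (-1) ^ (L.length - j) * P.eval b := by
  rcases hj.lt_or_eq with hj | rfl
  · refine ⟨L[j], fun i hi => ⟨fun h => ?_, fun h => ?_⟩, hsign j hj⟩
    · exact hL.sortedLE.getElem_le_getElem_of_le h.le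
    · exact hL.sortedLE.getElem_le_getElem_of_le h
  · have habove : ∀ᶠ b in atTop, ∀ y ∈ L, y ≤ b :=
      L.finite_toSet.eventually_all.2 fun y _ => eventually_ge_atTop y
    have hpos := (P.tendsto_atTop_of_leadingCoeff_nonneg (natDegree_pos_iff_degree_pos.1 hdeg)
      hlead.le).eventually_gt_atTop 0
    obtain ⟨b, hb, habove⟩ := (hpos.and habove).exists
    refine ⟨b, fun i hi => ⟨fun _ => habove _ (List.getElem_mem hi),
      fun h => absurd h (not_le.2 hi)⟩, by simpa using hb⟩

theorem exists_roots_eq_ofFn_interlacing (hL : L.SortedLT)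
    (hdeg : P.natDegree = L.length + 1) (hlead : 0 < P.leadingCoeff)
    (hsign : ∀ i (hi : i < L.length), 0 < (-1) ^ (L.length - i) * P.eval L[i]) :
    ∃ g : Fin (L.length + 1) → ℝ, StrictMono g ∧ P.roots = List.ofFn g ∧
      ∀ i : Fin L.length, g i.castSucc < L[i] ∧ L[i] < g i.succ := by
  have hgap : ∀ j ≤ L.length, ∃ x, P.IsRoot x ∧
      ∀ i (hi : i < L.length), (i < j → L[i] < x) ∧ (j ≤ i → x < L[i]) := by
    intro j hj
    obtain ⟨a, haL, ha⟩ :=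
      exists_mem_closedGap_neg_one_pow_succ_mul_eval_pos hL hdeg hlead hsign hj
    obtain ⟨b, hbL, hb⟩ :=
      exists_mem_closedGap_neg_one_pow_mul_eval_pos hL (by omega) hlead hsign hj
    obtain ⟨x, ⟨hax, hxb⟩, hx⟩ := P.exists_isRoot_of_eval_mul_neg
      (mul_neg_of_neg_one_pow_succ_mul_pos ha hb)
    refine ⟨x, hx, fun i hi => ⟨fun h => ?_, fun h => ?_⟩⟩
    · exact (le_inf ((haL i hi).1 h) ((hbL i hi).1 h)).trans_lt hax
    · exact hxb.trans_le (sup_le ((haL i hi).2 h) ((hbL i hi).2 h))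
  choose g hroot hg using fun j : Fin (L.length + 1) => hgap j j.is_le
  have hinter : ∀ i : Fin L.length, g i.castSucc < L[i] ∧ L[i] < g i.succ := fun i =>
    ⟨(hg _ i i.2).2 le_rfl, (hg _ i i.2).1 (Nat.lt_succ_self i)⟩
  have hmono : StrictMono g := Fin.strictMono_iff_lt_succ.2 fun i => (hinter i).1.trans (hinter i).2
  exact ⟨g, hmono, roots_eq_ofFn_of_injective hdeg hmono.injective hroot, hinter⟩

end Interlacing

theorem neg_one_pow_mul_eval_sort_roots_pos_of_wronskian {P Q : ℝ[X]}
    (hsplit : Q.roots.card = Q.natDegree) (hlead : 0 < Q.leadingCoeff) (hnodup : Q.roots.Nodup)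
    (hW : ∀ r ∈ Q.roots,
      0 < (derivative P).eval r * Q.eval r - (derivative Q).eval r * P.eval r)
    (i : ℕ) (hi : i < (Q.roots.sort (· ≤ ·)).length) :
    0 < (-1) ^ ((Q.roots.sort (· ≤ ·)).length - i) * P.eval (Q.roots.sort (· ≤ ·))[i] := by
  set L := Q.roots.sort (· ≤ ·)
  have hLQ : (L : Multiset ℝ) = Q.roots := Multiset.sort_eq _ _
  have hr : L[i] ∈ Q.roots := hLQ ▸ Multiset.mem_coe.2 (List.getElem_mem hi)
  have hQ' := neg_one_pow_card_filter_lt_mul_eval_derivative_pos hsplit hlead hnodup hr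
  rw [← hLQ, Multiset.filter_coe, Multiset.coe_card,
    (Multiset.sortedLT_sort_of_nodup hnodup).length_filter_getElem_lt i hi] at hQ'
  have hPQ' : (derivative Q).eval L[i] * P.eval L[i] < 0 := by
    have := hW _ hr
    rw [(mem_roots'.1 hr).2, mul_zero, zero_sub] at this
    linarith
  rw [show L.length - i = L.length - 1 - i + 1 by omega]
  exact neg_one_pow_succ_mul_pos_of_mul_neg hQ' hPQ'

end Polynomial

theorem wronskian_interlacing (m : ℕ) (hm : 2 ≤ m) (P Q : ℝ[X])
    (hdegP : P.natDegree = m) (hdegQ : Q.natDegree = m - 1)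
    (hPlead : 0 < P.leadingCoeff) (hQlead : 0 < Q.leadingCoeff)
    (hW : ∀ x : ℝ, (derivative P).eval x * Q.eval x - (derivative Q).eval x * P.eval x > 0)
    (hQroots : Q.roots.card = m - 1 ∧ Q.roots.Nodup) :
    (P.roots.card = m ∧ P.roots.Nodup) ∧
      ∀ i, i + 1 < m →
        (P.roots.sort (· ≤ ·))[i]! < (Q.roots.sort (· ≤ ·))[i]! ∧
          (Q.roots.sort (· ≤ ·))[i]! < (P.roots.sort (· ≤ ·))[i + 1]! := by
  have hlen : (Q.roots.sort (· ≤ ·)).length = m - 1 := by rw [Multiset.length_sort, hQroots.1]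
  obtain ⟨g, hg, hroots, hinter⟩ :=
    exists_roots_eq_ofFn_interlacing (Multiset.sortedLT_sort_of_nodup hQroots.2) (by omega) hPlead
      (neg_one_pow_mul_eval_sort_roots_pos_of_wronskian (by rw [hQroots.1, hdegQ]) hQlead
        hQroots.2 fun r _ => hW r)
  have hsort : P.roots.sort (· ≤ ·) = List.ofFn g := by
    rw [hroots, Multiset.coe_sort, List.mergeSort_eq_self _ hg.sortedLT_ofFn.sortedLE.pairwise]
  refine ⟨⟨by rw [hroots, Multiset.coe_card, List.length_ofFn]; omega,
    by rw [hroots]; exact Multiset.coe_nodup.2 hg.sortedLT_ofFn.nodup⟩, fun i hi => ?_⟩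
  have hi' : i < (Q.roots.sort (· ≤ ·)).length := by omega
  rw [hsort, getElem!_pos (Q.roots.sort (· ≤ ·)) i hi',
    getElem!_pos (List.ofFn g) i (by rw [List.length_ofFn]; omega),
    getElem!_pos (List.ofFn g) (i + 1) (by rw [List.length_ofFn]; omega),
    List.getElem_ofFn, List.getElem_ofFn]
  exact hinter ⟨i, hi'⟩
end

section
/- Let Q be a monic real polynomial of degree m ≥ 2 such that Q'(x)^2 - Q(x)Q''(x) > 0 for all real x, and suppose its derivative Q' has m-1 distinct real roots. Then Q has no non-real roots. -/
open Polynomial Filter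

private lemma aux_sign_prod {n : ℕ} (f : Fin n → ℝ) (hf : ∀ j, f j ≠ 0) :
    0 < (-1:ℝ) ^ (Finset.univ.filter (fun j => f j < 0)).card * ∏ j, f j := by
  classical
  set s := Finset.univ.filter (fun j => f j < 0) with hs
  have hsplit : (∏ j ∈ s, f j) * ∏ j ∈ Finset.univ.filter (fun j => ¬ f j < 0), f j
      = ∏ j, f j := Finset.prod_filter_mul_prod_filter_not _ _ _
  have hpos : 0 < ∏ j ∈ Finset.univ.filter (fun j => ¬ f j < 0), f j := by
    apply Finset.prod_pos
    intro j hj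
    simp only [Finset.mem_filter] at hj
    exact lt_of_le_of_ne (not_lt.mp hj.2) (Ne.symm (hf j))
  have hneg : ∏ j ∈ s, f j = (-1:ℝ) ^ s.card * ∏ j ∈ s, (-(f j)) := by
    rw [← Finset.prod_const, ← Finset.prod_mul_distrib]
    simp
  have hpos2 : 0 < ∏ j ∈ s, (-(f j)) := by
    apply Finset.prod_pos
    intro j hj
    simp only [hs, Finset.mem_filter] at hj
    linarith [hj.2]
  have h1 : (-1:ℝ) ^ s.card * (-1:ℝ) ^ s.card = 1 := by
    rw [← pow_add]
    exact Even.neg_one_pow ⟨s.card, rfl⟩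
  have hkey : (-1:ℝ) ^ s.card * ∏ j, f j
      = (∏ j ∈ s, (-(f j))) * ∏ j ∈ Finset.univ.filter (fun j => ¬ f j < 0), f j := by
    rw [← hsplit, hneg]
    linear_combination ((∏ j ∈ s, (-(f j))) *
      ∏ j ∈ Finset.univ.filter (fun j => ¬ f j < 0), f j) * h1
  rw [hkey]
  exact mul_pos hpos2 hpos

private lemma aux_ivt {f : ℝ → ℝ} (hf : Continuous f) {a b : ℝ} (hab : a < b)
    (h : f a * f b < 0) : ∃ c ∈ Set.Ioo a b, f c = 0 := by
  rcases lt_or_ge (f a) 0 with ha | ha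
  · have hb : 0 < f b := by nlinarith
    have : (0:ℝ) ∈ Set.Ioo (f a) (f b) := ⟨ha, hb⟩
    obtain ⟨c, hc, hc0⟩ := intermediate_value_Ioo hab.le hf.continuousOn this
    exact ⟨c, hc, hc0⟩
  · have hane : f a ≠ 0 := by intro heq; rw [heq, zero_mul] at h; exact lt_irrefl 0 h
    have ha' : 0 < f a := lt_of_le_of_ne ha (Ne.symm hane)
    have hb : f b < 0 := by nlinarith
    have : (0:ℝ) ∈ Set.Ioo (f b) (f a) := ⟨hb, ha'⟩
    obtain ⟨c, hc, hc0⟩ := intermediate_value_Ioo' hab.le hf.continuousOn this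
    exact ⟨c, hc, hc0⟩

theorem no_nonreal_roots (m : ℕ) (hm : 2 ≤ m) (Q : ℝ[X]) (hmonic : Q.Monic)
    (hdeg : Q.natDegree = m)
    (hineq : ∀ x : ℝ,
      ((derivative Q).eval x) ^ 2 - Q.eval x * ((derivative (derivative Q)).eval x) > 0)
    (hQ' : (derivative Q).roots.card = m - 1 ∧ (derivative Q).roots.Nodup) :
    ∀ z : ℂ, aeval z Q = 0 → z.im = 0 := by
  classical
  obtain ⟨hQ'card, hQ'nodup⟩ := hQ'
  set n := m - 1 with hn
  have hn1 : 1 ≤ n := by omega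
  have hnm : n + 1 = m := by omega
  have hQne : Q ≠ 0 := hmonic.ne_zero
  -- the derivative
  set Q' : ℝ[X] := derivative Q with hQ'def
  set Q'' : ℝ[X] := derivative Q' with hQ''def
  have hcoeff : Q'.coeff n = (m : ℝ) := by
    rw [hQ'def, coeff_derivative]
    have h1 : Q.coeff (n + 1) = 1 := by rw [hnm, ← hdeg]; exact hmonic.coeff_natDegree
    rw [h1, one_mul]
    exact_mod_cast congrArg (Nat.cast : ℕ → ℝ) hnm
  have hmpos : (0:ℝ) < (m:ℝ) := by positivity
  have hQ'ne : Q' ≠ 0 := by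
    intro h
    rw [h, coeff_zero] at hcoeff
    have hm0 : m ≠ 0 := by omega
    exact hm0 (by exact_mod_cast hcoeff.symm)
  have hd' : Q'.natDegree = n := le_antisymm
    (by have := natDegree_derivative_le Q; rw [hdeg] at this; exact this)
    (le_natDegree_of_ne_zero (by rw [hcoeff]; positivity))
  have hlc : Q'.leadingCoeff = (m:ℝ) := by rw [leadingCoeff, hd', hcoeff]
  -- the finset of roots of Q'
  set S : Finset ℝ := Q'.roots.toFinset with hSdef
  have hSval : S.val = Q'.roots := by
    simp [hSdef, Multiset.toFinset_val, Multiset.dedup_eq_self.mpr hQ'nodup]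
  have hScard : S.card = n := by
    rw [Finset.card, hSval, hQ'card]
  set e := S.orderIsoOfFin hScard with hedef
  set a : Fin n → ℝ := fun i => (e i : ℝ) with hadef
  have ha_mono : StrictMono a := fun i j hij => by
    exact_mod_cast e.strictMono hij
  have ha_mem : ∀ i, a i ∈ S := fun i => (e i).2
  have ha_surj : ∀ x ∈ S, ∃ i, a i = x := by
    intro x hx
    exact ⟨e.symm ⟨x, hx⟩, by simp [hadef]⟩
  have root_a : ∀ i, Q'.eval (a i) = 0 := by
    intro i
    have := ha_mem i
    rw [hSdef, Multiset.mem_toFinset, mem_roots hQ'ne] at this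
    exact this
  have hne_root : ∀ x, x ∉ S → Q'.eval x ≠ 0 := by
    intro x hx h
    exact hx (by rw [hSdef, Multiset.mem_toFinset, mem_roots hQ'ne]; exact h)
  -- product formula
  have hprod : ∀ x, Q'.eval x = (m:ℝ) * ∏ i, (x - a i) := by
    intro x
    have h0 : Multiset.card Q'.roots = Q'.natDegree := by rw [hd', hQ'card]
    have h1 := C_leadingCoeff_mul_prod_multiset_X_sub_C h0
    have h2 : Q'.eval x = Q'.leadingCoeff * (Multiset.map (fun r => x - r) Q'.roots).prod := by
      conv_lhs => rw [← h1]
      rw [eval_mul, eval_C, eval_multiset_prod, Multiset.map_map]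
      simp
    rw [h2, hlc, ← hSval]
    congr 1
    have : (Multiset.map (fun r => x - r) S.val).prod = ∏ r ∈ S, (x - r) := rfl
    rw [this, ← Finset.prod_coe_sort S (fun r => x - r),
      ← Equiv.prod_comp e.toEquiv (fun r : S => x - (r:ℝ))]
    rfl
  -- sign of Q' off the roots
  have key : ∀ x, x ∉ S →
      0 < (-1:ℝ) ^ (Finset.univ.filter (fun j => x < a j)).card * Q'.eval x := by
    intro x hx
    have hf : ∀ j, x - a j ≠ 0 := by
      intro j h
      exact hne_root x hx (by rw [show x = a j by linarith [sub_eq_zero.mp h]]; exact root_a j)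
    have := aux_sign_prod (fun j => x - a j) hf
    have hfilt : (Finset.univ.filter (fun j => x - a j < 0)) =
        (Finset.univ.filter (fun j => x < a j)) := by
      exact Finset.filter_congr (fun j _ => by simp [sub_neg])
    rw [hfilt] at this
    rw [hprod x]
    nlinarith [this]
  set ε : Fin n → ℝ := fun i => (-1:ℝ) ^ (n - 1 - (i:ℕ)) with hεdef
  have hε2 : ∀ i, ε i * ε i = 1 := by
    intro i; rw [hεdef, ← pow_add]; exact Even.neg_one_pow ⟨_, rfl⟩
  -- sign of Q' on intervals
  have sgn_right : ∀ (i : Fin n) (x : ℝ), a i < x → (∀ j, i < j → x < a j) →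
      0 < ε i * Q'.eval x := by
    intro i x hx hx2
    have hxS : x ∉ S := by
      intro hxS
      obtain ⟨j, hj⟩ := ha_surj x hxS
      rcases lt_or_ge i j with h | h
      · exact absurd (hx2 j h) (by rw [hj]; exact lt_irrefl x)
      · have : a j ≤ a i := ha_mono.monotone h
        rw [hj] at this; linarith
    have hfilt : (Finset.univ.filter (fun j => x < a j)) = Finset.Ioi i := by
      ext j
      simp only [Finset.mem_filter, Finset.mem_univ, true_and, Finset.mem_Ioi]
      constructor
      · intro h
        by_contra hc
        have : a j ≤ a i := ha_mono.monotone (not_lt.mp hc)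
        linarith
      · exact hx2 j
    have := key x hxS
    rw [hfilt, Fin.card_Ioi] at this
    exact this
  have sgn_left : ∀ (i : Fin n) (x : ℝ), x < a i → (∀ j, j < i → a j < x) →
      0 < (-(ε i)) * Q'.eval x := by
    intro i x hx hx2
    have hxS : x ∉ S := by
      intro hxS
      obtain ⟨j, hj⟩ := ha_surj x hxS
      rcases lt_or_ge j i with h | h
      · exact absurd (hx2 j h) (by rw [hj]; exact lt_irrefl x)
      · have : a i ≤ a j := ha_mono.monotone h
        rw [hj] at this; linarith
    have hfilt : (Finset.univ.filter (fun j => x < a j)) = Finset.Ici i := by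
      ext j
      simp only [Finset.mem_filter, Finset.mem_univ, true_and, Finset.mem_Ici]
      constructor
      · intro h
        by_contra hc
        exact absurd (hx2 j (not_le.mp hc)) (by linarith)
      · intro h
        exact lt_of_lt_of_le hx (ha_mono.monotone h)
    have := key x hxS
    rw [hfilt, Fin.card_Ici] at this
    have hpow : (-1:ℝ) ^ (n - (i:ℕ)) = -(ε i) := by
      rw [hεdef]
      have : n - (i:ℕ) = (n - 1 - (i:ℕ)) + 1 := by omega
      rw [this, pow_succ]
      ring
    rw [hpow] at this
    exact this
  -- Q(a i) and Q''(a i) are nonzero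
  have hQa_ne : ∀ i, Q.eval (a i) * Q''.eval (a i) < 0 := by
    intro i
    have h := hineq (a i)
    rw [root_a i] at h
    nlinarith
  -- sign of Q'' at the roots
  have sgnQ'' : ∀ i, 0 < ε i * Q''.eval (a i) := by
    intro i
    -- separation
    obtain ⟨δ, hδ0, hδ⟩ : ∃ δ > 0, ∀ j, j ≠ i → δ ≤ |a j - a i| := by
      by_cases hs : (Finset.univ.filter (fun j => j ≠ i)).Nonempty
      · obtain ⟨j0, hj0mem, hj0⟩ := Finset.exists_min_image _ (fun j => |a j - a i|) hs
        simp only [Finset.mem_filter, Finset.mem_univ, true_and] at hj0mem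
        refine ⟨|a j0 - a i|, ?_, ?_⟩
        · exact abs_pos.mpr (sub_ne_zero.mpr (fun h => hj0mem (ha_mono.injective h)))
        · intro j hj
          exact hj0 j (by simp [hj])
      · exact ⟨1, one_pos, fun j hj => absurd ⟨j, by simp [hj]⟩ hs⟩
    have hslope : ∀ᶠ x in nhdsWithin (a i) {a i}ᶜ,
        0 ≤ ε i * slope (fun y => Q'.eval y) (a i) x := by
      have hmem : ∀ᶠ x in nhdsWithin (a i) {a i}ᶜ,
          x ∈ Set.Ioo (a i - δ) (a i + δ) ∧ x ≠ a i := by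
        filter_upwards [inter_mem_nhdsWithin {a i}ᶜ
          (Ioo_mem_nhds (show a i - δ < a i by linarith) (show a i < a i + δ by linarith))] with x hx
        exact ⟨hx.2, hx.1⟩
      filter_upwards [hmem] with x ⟨hxIoo, hxne⟩
      have hslope_eq : slope (fun y => Q'.eval y) (a i) x = Q'.eval x / (x - a i) := by
        rw [slope_def_field, root_a i, sub_zero]
      rcases lt_or_gt_of_ne hxne with hlt | hgt
      · -- x < a i
        have h1 : 0 < (-(ε i)) * Q'.eval x := by
          apply sgn_left i x hlt
          intro j hj
          have hj1 : a j < a i := ha_mono hj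
          have := hδ j (ne_of_lt hj)
          rw [abs_of_neg (by linarith)] at this
          have : a j ≤ a i - δ := by linarith
          linarith [hxIoo.1]
        rw [hslope_eq, ← mul_div_assoc]
        have hx0 : x - a i < 0 := by linarith
        have hneg : ε i * Q'.eval x < 0 := by nlinarith
        exact le_of_lt (div_pos_of_neg_of_neg hneg hx0)
      · -- a i < x
        have h1 : 0 < ε i * Q'.eval x := by
          apply sgn_right i x hgt
          intro j hj
          have hj1 : a i < a j := ha_mono hj
          have := hδ j (ne_of_gt hj)
          rw [abs_of_pos (by linarith)] at this
          linarith [hxIoo.2]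
        rw [hslope_eq, ← mul_div_assoc]
        have hx0 : 0 < x - a i := by linarith
        exact le_of_lt (div_pos h1 hx0)
    have hT : Tendsto (fun x => ε i * slope (fun y => Q'.eval y) (a i) x)
        (nhdsWithin (a i) {a i}ᶜ) (nhds (ε i * Q''.eval (a i))) := by
      exact ((hasDerivAt_iff_tendsto_slope.mp (Polynomial.hasDerivAt Q' (a i))).const_mul _)
    have h0 : 0 ≤ ε i * Q''.eval (a i) := ge_of_tendsto hT hslope
    have hne : Q''.eval (a i) ≠ 0 := by
      intro h
      have := hQa_ne i
      rw [h] at this; simp at this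
    rcases lt_or_eq_of_le h0 with h | h
    · exact h
    · exfalso
      have hεne : ε i ≠ 0 := by
        intro h'
        have h2 := hε2 i
        rw [h', mul_zero] at h2
        norm_num at h2
      rcases mul_eq_zero.mp h.symm with h' | h'
      · exact hεne h'
      · exact hne h' 
  -- sign of Q at the roots of Q'
  have sgnQ : ∀ i, ε i * Q.eval (a i) < 0 := by
    intro i
    have h1 := hQa_ne i
    have h2 := sgnQ'' i
    have h3 := hε2 i
    nlinarith
  have hεstep : ∀ i j : Fin n, (j:ℕ) = (i:ℕ) + 1 → ε i = -(ε j) := by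
    intro i j h
    have hj := j.2
    rw [hεdef]
    simp only
    rw [show n - 1 - (i:ℕ) = (n - 1 - (j:ℕ)) + 1 by omega, pow_succ]
    ring
  have hQcont : Continuous fun x => Q.eval x := Polynomial.continuous Q
  -- a point to the left where (ε 0) * Q is positive
  have left : ∃ y, y < a ⟨0, hn1⟩ ∧ 0 < ε ⟨0, hn1⟩ * Q.eval y := by
    set p : ℝ[X] := C ((-1:ℝ)^m) * Q.comp (-X) with hpdef
    have hCne : ((-1:ℝ)^m) ≠ 0 := by
      intro h
      have := pow_eq_zero_iff (n := m) (by omega) |>.mp h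
      norm_num at this
    have hXdeg : (-X : ℝ[X]).natDegree = 1 := by simp
    have hXlc : (-X : ℝ[X]).leadingCoeff = -1 := by simp [leadingCoeff]
    have hplc : p.leadingCoeff = 1 := by
      rw [hpdef, leadingCoeff_mul, leadingCoeff_C,
        leadingCoeff_comp (by rw [hXdeg]; omega), hmonic.leadingCoeff, hXlc, hdeg, one_mul,
        ← pow_add]
      exact Even.neg_one_pow ⟨m, rfl⟩
    have hpdeg : p.natDegree = m := by
      rw [hpdef, natDegree_C_mul hCne, natDegree_comp, hXdeg, hdeg, mul_one]
    have htend := tendsto_atTop_of_leadingCoeff_nonneg p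
      (natDegree_pos_iff_degree_pos.mp (by omega)) (by rw [hplc]; norm_num)
    obtain ⟨x, hx⟩ :=
      ((htend.eventually_gt_atTop 0).and (Filter.eventually_gt_atTop (-(a ⟨0, hn1⟩)))).exists
    refine ⟨-x, by linarith [hx.2], ?_⟩
    have hev : eval x p = (-1:ℝ)^m * Q.eval (-x) := by
      rw [hpdef]
      simp [eval_comp]
    have hεm : ((-1:ℝ))^m = ε ⟨0, hn1⟩ := by
      rw [hεdef]
      simp only [Fin.val_mk, Nat.sub_zero]
      rw [show m = (n - 1) + 2 by omega, pow_add]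
      norm_num
    rw [← hεm]
    rw [hev] at hx
    exact hx.1
  -- a point to the right where Q is positive
  have right : ∃ b, a ⟨n - 1, by omega⟩ < b ∧ 0 < Q.eval b := by
    have htend := tendsto_atTop_of_leadingCoeff_nonneg Q
      (natDegree_pos_iff_degree_pos.mp (by omega)) (by rw [hmonic.leadingCoeff]; norm_num)
    obtain ⟨x, hx⟩ :=
      ((htend.eventually_gt_atTop 0).and (Filter.eventually_gt_atTop (a ⟨n - 1, by omega⟩))).exists
    exact ⟨x, hx.2, hx.1⟩
  -- existence of roots of Q in each interval
  have exist : ∀ k : ℕ, k ≤ n → ∃ x, Q.eval x = 0 ∧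
      (∀ hk2 : k < n, x < a ⟨k, hk2⟩) ∧ (∀ j : Fin n, (j:ℕ) < k → a j < x) := by
    intro k hk
    by_cases hk0 : k = 0
    · subst hk0
      obtain ⟨y, hy1, hy2⟩ := left
      have h1 := sgnQ ⟨0, hn1⟩
      have h2 := hε2 ⟨0, hn1⟩
      have hsign : Q.eval y * Q.eval (a ⟨0, hn1⟩) < 0 := by nlinarith
      obtain ⟨c, hc, hc0⟩ := aux_ivt hQcont hy1 hsign
      exact ⟨c, hc0, fun _ => hc.2, fun j hj => absurd hj (Nat.not_lt_zero _)⟩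
    by_cases hkn : k = n
    · subst hkn
      obtain ⟨b, hb1, hb2⟩ := right
      set iR : Fin n := ⟨n - 1, by omega⟩ with hiR
      have hεR : ε iR = 1 := by
        rw [hεdef]
        simp [hiR]
      have h1 := sgnQ iR
      rw [hεR, one_mul] at h1
      have hsign : Q.eval (a iR) * Q.eval b < 0 := mul_neg_of_neg_of_pos h1 hb2
      obtain ⟨c, hc, hc0⟩ := aux_ivt hQcont hb1 hsign
      refine ⟨c, hc0, fun hk2 => absurd hk2 (by omega), ?_⟩
      intro j hj
      have : a j ≤ a iR := ha_mono.monotone (by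
        rw [Fin.le_def]
        simp only [hiR]
        omega)
      linarith [hc.1]
    · -- 0 < k < n
      have hk1 : 1 ≤ k := by omega
      have hkn' : k < n := by omega
      set i' : Fin n := ⟨k - 1, by omega⟩ with hi'
      set i : Fin n := ⟨k, hkn'⟩ with hi
      have hlt : a i' < a i := ha_mono (by rw [Fin.lt_def]; simp only [hi, hi']; omega)
      have hεr : ε i' = -(ε i) := hεstep i' i (by simp only [hi, hi']; omega)
      have hA : 0 < ε i * Q.eval (a i') := by
        have := sgnQ i'
        rw [hεr] at this
        linarith
      have hB := sgnQ i
      have hAB : (ε i * Q.eval (a i')) * (ε i * Q.eval (a i)) < 0 :=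
        mul_neg_of_pos_of_neg hA hB
      have heq : (ε i * Q.eval (a i')) * (ε i * Q.eval (a i))
          = Q.eval (a i') * Q.eval (a i) := by
        rw [show (ε i * Q.eval (a i')) * (ε i * Q.eval (a i))
          = (ε i * ε i) * (Q.eval (a i') * Q.eval (a i)) by ring, hε2 i, one_mul]
      rw [heq] at hAB
      obtain ⟨c, hc, hc0⟩ := aux_ivt hQcont hlt hAB
      refine ⟨c, hc0, fun hk2 => hc.2, ?_⟩
      intro j hj
      have : a j ≤ a i' := ha_mono.monotone (by rw [Fin.le_def]; simp only [hi']; omega)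
      linarith [hc.1]
  -- assemble m distinct real roots
  have exist' := fun (k : Fin m) => exist (k:ℕ) (by have := k.2; omega)
  set r : Fin m → ℝ := fun k => (exist' k).choose with hrdef
  have hr := fun k => (exist' k).choose_spec
  have hr_mono : StrictMono r := by
    intro k k' hkk'
    have hkk : (k:ℕ) < (k':ℕ) := hkk'
    have hk2 : (k:ℕ) < n := by have := k'.2; omega
    calc r k < a ⟨k, hk2⟩ := (hr k).2.1 hk2
      _ < r k' := (hr k').2.2 ⟨k, hk2⟩ (by simpa using hkk)
  have hroot_r : ∀ k, Q.eval (r k) = 0 := fun k => (hr k).1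
  set T : Finset ℝ := Finset.univ.image r with hTdef
  have hTcard : T.card = m := by
    rw [hTdef, Finset.card_image_of_injective _ hr_mono.injective, Finset.card_univ,
      Fintype.card_fin]
  have hle : T.val ≤ Q.roots := by
    rw [Multiset.le_iff_count]
    intro x
    by_cases hx : x ∈ T
    · have hx1 : Multiset.count x T.val ≤ 1 := Multiset.nodup_iff_count_le_one.mp T.nodup x
      have hxr : Q.IsRoot x := by
        obtain ⟨k, _, hk⟩ := Finset.mem_image.mp hx
        rw [← hk]
        exact hroot_r k
      have hx2 : 1 ≤ Multiset.count x Q.roots := by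
        rw [count_roots]
        exact (rootMultiplicity_pos hQne).mpr hxr
      omega
    · rw [Multiset.count_eq_zero.mpr (fun h => hx h)]
      exact Nat.zero_le _
  have hcard : Multiset.card Q.roots = Q.natDegree := by
    have h1 : m ≤ Multiset.card Q.roots := by
      calc m = T.card := hTcard.symm
        _ = Multiset.card T.val := rfl
        _ ≤ _ := Multiset.card_le_card hle
    have h2 := Q.card_roots'
    omega
  have hsplits := (splits_iff_card_roots (f := Q)).mpr hcard
  intro z hz
  rw [aeval_def] at hz
  have hz' : eval z (Q.map (algebraMap ℝ ℂ)) = 0 := by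
    rw [← eval₂_eq_eval_map]
    exact hz
  have hmapne : Q.map (algebraMap ℝ ℂ) ≠ 0 := Polynomial.map_ne_zero hQne
  have hzmem : z ∈ (Q.map (algebraMap ℝ ℂ)).roots := by
    rw [mem_roots hmapne]
    exact hz'
  rw [hsplits.roots_map (algebraMap ℝ ℂ)] at hzmem
  obtain ⟨x, _, hx⟩ := Multiset.mem_map.mp hzmem
  rw [← hx]
  simp
end

section
/- Let Q be a real polynomial with positive leading coefficient and suppose a is the largest real root of Q', where Q' has all real simple roots and Q'(x)^2 - Q(x)Q''(x) > 0 for all real x. Then Q(a) < 0. -/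
open Polynomial Filter Topology

/-! At the largest critical point `a` we have `Q'(a) = 0`, so the hypothesis reads
`-Q(a) Q''(a) > 0`. Since `Q'` has positive leading coefficient and no roots beyond `a`,
it is positive on `(a, ∞)`, which forces `Q''(a) ≥ 0`; hence `Q(a) < 0`. -/

theorem HasDerivAt.nonneg_of_le_right {f : ℝ → ℝ} {f' a : ℝ} (hf : HasDerivAt f f' a)
    (hright : ∀ x, a < x → f a ≤ f x) : 0 ≤ f' := by
  have hslope : Tendsto (slope f a) (𝓝[>] a) (𝓝 f') :=
    (hasDerivAt_iff_tendsto_slope.mp hf).mono_left (nhdsWithin_mono a fun _ hy => ne_of_gt hy)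
  refine ge_of_tendsto hslope ?_
  filter_upwards [self_mem_nhdsWithin] with x (hx : a < x)
  rw [slope_def_field]
  exact div_nonneg (sub_nonneg.mpr (hright x hx)) (sub_nonneg.mpr hx.le)

namespace Polynomial

theorem eval_pos_of_forall_roots_le {p : ℝ[X]} {a x : ℝ} (hlc : 0 < p.leadingCoeff)
    (hroots : ∀ r ∈ p.roots, r ≤ a) (hx : a < x) : 0 < p.eval x := by
  have hp : p ≠ 0 := leadingCoeff_ne_zero.mp hlc.ne'
  rcases le_or_gt p.degree 0 with hdeg | hdeg
  · rw [eq_C_of_degree_le_zero hdeg, eval_C]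
    rwa [leadingCoeff, natDegree_eq_zero_iff_degree_le_zero.mpr hdeg] at hlc
  by_contra! hnonpos
  obtain ⟨z, hz, hxz⟩ := ((p.tendsto_atTop_of_leadingCoeff_nonneg hdeg hlc.le).eventually_gt_atTop
    0 |>.and (eventually_gt_atTop x)).exists
  obtain ⟨r, hr, hr0⟩ := intermediate_value_Icc hxz.le p.continuousOn ⟨hnonpos, hz.le⟩
  have := hroots r ((mem_roots hp).mpr hr0)
  linarith [hr.1]

end Polynomial

theorem eval_largest_crit_neg_general (Q : ℝ[X])
    (hlead : 0 < Q.leadingCoeff)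
    (hineq : ∀ x : ℝ,
      ((derivative Q).eval x) ^ 2 - Q.eval x * ((derivative (derivative Q)).eval x) > 0)
    (a : ℝ) (ha : a ∈ (derivative Q).roots) (hmax : ∀ b ∈ (derivative Q).roots, b ≤ a) :
    Q.eval a < 0 := by
  obtain ⟨hQ', hroot⟩ := mem_roots'.mp ha
  have hlc' : 0 < (derivative Q).leadingCoeff := by
    rw [leadingCoeff_derivative]
    exact mul_pos hlead (Nat.cast_pos.mpr (Nat.pos_of_ne_zero (derivative_ne_zero.mp hQ')))
  have hQ'' : 0 ≤ (derivative (derivative Q)).eval a :=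
    ((derivative Q).hasDerivAt a).nonneg_of_le_right fun x hx => by
      rw [hroot]; exact (eval_pos_of_forall_roots_le hlc' hmax hx).le
  have hprod := hineq a
  rw [hroot] at hprod
  exact neg_of_mul_neg_left (by linarith) hQ''

theorem eval_largest_crit_neg (m : ℕ) (hm : 2 ≤ m) (Q : ℝ[X]) (hdeg : Q.natDegree = m)
    (hlead : 0 < Q.leadingCoeff)
    (hineq : ∀ x : ℝ,
      ((derivative Q).eval x) ^ 2 - Q.eval x * ((derivative (derivative Q)).eval x) > 0)
    (hQ' : (derivative Q).roots.card = m - 1 ∧ (derivative Q).roots.Nodup)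
    (a : ℝ) (ha : a ∈ (derivative Q).roots) (hmax : ∀ b ∈ (derivative Q).roots, b ≤ a) :
    Q.eval a < 0 :=
  eval_largest_crit_neg_general Q hlead hineq a ha hmax
end
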